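/- For every permutation σ of [n], zeil(σ) = min(rmax(σ), tls(σ)), where zeil(σ) is the largest m ≥ 1 such that the entries n, n−1, ..., n−m+1 appear in decreasing order of position in σ, rmax(σ) is the number of right-to-left maxima of σ, and tls(σ) is the tail length of s(σ). -/

import Mathlib

/-- West's stack-sorting map, implemented with fuel (fuel = length suffices). -/
def ssAux : ℕ → List ℕ → List ℕ
  | 0, _ => []
  | _ + 1, [] => []
  | fuel + 1, l =>
    let m := l.foldr max 0
    let i := l.idxOf m
    ssAux fuel (l.take i) ++ ssAux fuel (l.drop (i + 1)) ++ [m]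

/-- West's stack-sorting map `s`. -/
def stackSort (l : List ℕ) : List ℕ := ssAux l.length l

/-- `σ` contains the classical pattern `τ`. -/
def Contains (τ σ : List ℕ) : Prop :=
  ∃ f : Fin τ.length → Fin σ.length, StrictMono f ∧
    ∀ i j : Fin τ.length, τ.get i < τ.get j ↔ σ.get (f i) < σ.get (f j)

/-- `σ` avoids the classical pattern `τ`. -/
def Avoids (σ τ : List ℕ) : Prop := ¬ Contains τ σ

/-- The tail length of a permutation `π` of `[n]` (as a list, 1-indexed entries): the
smallest `ℓ ≥ 0` such that `π_{n-ℓ} ≠ n-ℓ`, with the tail length of the identity equal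
to `n`. -/
noncomputable def tailLen (n : ℕ) (π : List ℕ) : ℕ :=
  sInf {ℓ : ℕ | ℓ = n ∨ π.getD (n - ℓ - 1) 0 ≠ n - ℓ}

/-- The number of right-to-left maxima of `σ`. -/
def rmaxCount (σ : List ℕ) : ℕ :=
  (Finset.univ.filter (fun i : Fin σ.length =>
    ∀ j : Fin σ.length, i < j → σ.get j < σ.get i)).card

/-!
If `n, n-1, …, n-m+1` occur in this order, every entry `≥ n-m+1` is a right-to-left maximum,
and since `s(L n R) = s(L) s(R) n` outputs each maximum after everything around it, `s` moves
these entries to the end in increasing order: so `zeil ≤ rmax` and `zeil ≤ tls`.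
Conversely, suppose `x = n-k-1` occurs before `x+1` although `rmax, tls ≥ k+2`. Counting gives a
right-to-left maximum `a ∉ {x+1, …, n}`, and `a ≠ x` because `x+1` follows `x`, so `a < x`.
Induction along the max-decomposition shows that `x`, having a larger entry to its right, still
precedes `a` in `s(σ)`; but `tls ≥ k+2` makes `x, x+1, …, n` the last entries of `s(σ)`.
-/

open List

theorem List.Sublist.of_cons_append_of_notMem {α : Type*} {x : α} {t l₁ l₂ : List α}
    (h : x :: t <+ l₁ ++ l₂) (hx : x ∉ l₁) : x :: t <+ l₂ := by
  obtain ⟨p, q, hpq, hp, hq⟩ := List.sublist_append_iff.1 h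
  rcases p with _ | ⟨y, p⟩
  · rw [List.nil_append] at hpq
    rwa [hpq]
  · obtain ⟨rfl, -⟩ := List.cons.inj hpq
    exact absurd (hp.subset List.mem_cons_self) hx

theorem List.Nodup.idxOf_lt_idxOf_of_pair_sublist {α : Type*} [BEq α] [LawfulBEq α]
    {l : List α} {a b : α} (hl : l.Nodup) (h : [a, b] <+ l) : l.idxOf a < l.idxOf b := by
  have : l.Pairwise (fun u v => l.idxOf u < l.idxOf v) :=
    List.pairwise_iff_getElem.2 fun i j hi hj hij => by
      rwa [hl.idxOf_getElem, hl.idxOf_getElem]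
  exact this.forall_sublist h

theorem List.pair_sublist_of_idxOf_lt {α : Type*} [BEq α] [LawfulBEq α] {l : List α} {a b : α}
    (hb : b ∈ l) (h : l.idxOf a < l.idxOf b) : [a, b] <+ l := by
  have hb' := List.idxOf_lt_length_iff.2 hb
  simpa [List.getElem_idxOf] using List.map_getElem_sublist
    (l := l) (is := [⟨l.idxOf a, h.trans hb'⟩, ⟨l.idxOf b, hb'⟩]) (by simpa using h)

theorem le_of_pair_sublist_of_range'_suffix {s : List ℕ} {x a j : ℕ} (hs : s.Nodup) (hj : 0 < j)
    (hsuf : List.range' x j <:+ s) (h : [x, a] <+ s) : x ≤ a := by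
  obtain ⟨w, rfl⟩ := hsuf
  have hxw : x ∉ w := fun hxw => by
    rw [List.nodup_append] at hs
    exact hs.2.2 x hxw x (by simp [List.mem_range'_1]; omega) rfl
  have ha := (h.of_cons_append_of_notMem hxw).subset (by simp : a ∈ [x, a])
  rw [List.mem_range'_1] at ha
  exact ha.1

theorem le_of_mem_max_split {L R : List ℕ} {m z : ℕ} (hL : ∀ x ∈ L, x < m)
    (hR : ∀ x ∈ R, x ≤ m) (hz : z ∈ L ++ m :: R) : z ≤ m := by
  simp only [List.mem_append, List.mem_cons] at hz
  rcases hz with hz | rfl | hz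
  exacts [(hL z hz).le, le_rfl, hR z hz]

theorem foldr_max_append_cons {L R : List ℕ} {m : ℕ} (hL : ∀ x ∈ L, x < m)
    (hR : ∀ x ∈ R, x ≤ m) : (L ++ m :: R).foldr max 0 = m := by
  have hle : ∀ l : List ℕ, (∀ x ∈ l, x ≤ m) → l.foldr max 0 ≤ m := by
    intro l hl
    induction l with
    | nil => simp
    | cons a t ih => simp_all
  refine le_antisymm (hle _ fun x => le_of_mem_max_split hL hR) ?_
  induction L with
  | nil => simp
  | cons a t ih => simp_all

theorem exists_eq_append_cons_max {l : List ℕ} (hl : l ≠ []) :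
    ∃ L m R, l = L ++ m :: R ∧ (∀ x ∈ L, x < m) ∧ ∀ x ∈ R, x ≤ m := by
  induction l with
  | nil => exact absurd rfl hl
  | cons a t ih =>
    rcases eq_or_ne t [] with rfl | ht
    · exact ⟨[], a, [], rfl, by simp, by simp⟩
    obtain ⟨L, m, R, rfl, hL, hR⟩ := ih ht
    rcases lt_or_ge a m with ham | hma
    · exact ⟨a :: L, m, R, rfl, by simpa [ham] using hL, hR⟩
    · exact ⟨[], a, L ++ m :: R, rfl, by simp,
        fun x hx => (le_of_mem_max_split hL hR hx).trans hma⟩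

theorem ssAux_succ_append_cons (fuel : ℕ) {L R : List ℕ} {m : ℕ} (hL : ∀ x ∈ L, x < m)
    (hR : ∀ x ∈ R, x ≤ m) :
    ssAux (fuel + 1) (L ++ m :: R) = ssAux fuel L ++ ssAux fuel R ++ [m] := by
  have hidx : (L ++ m :: R).idxOf m = L.length := by
    rw [List.idxOf_append_of_notMem (fun h => (hL m h).false), List.idxOf_cons_self,
      Nat.add_zero]
  rw [ssAux.eq_3 _ _ (by simp), foldr_max_append_cons hL hR, hidx]
  simp

theorem ssAux_congr_fuel {f₁ f₂ : ℕ} {l : List ℕ} (h₁ : l.length ≤ f₁) (h₂ : l.length ≤ f₂) :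
    ssAux f₁ l = ssAux f₂ l := by
  induction f₁ generalizing f₂ l with
  | zero => cases f₂ <;> simp_all [ssAux]
  | succ f ih =>
    rcases eq_or_ne l [] with rfl | hl
    · cases f₂ <;> rfl
    obtain ⟨L, m, R, rfl, hL, hR⟩ := exists_eq_append_cons_max hl
    obtain ⟨g, rfl⟩ : ∃ g, f₂ = g + 1 := ⟨f₂ - 1, by simp at h₂; omega⟩
    simp only [List.length_append, List.length_cons] at h₁ h₂
    rw [ssAux_succ_append_cons f hL hR, ssAux_succ_append_cons g hL hR,
      ih (f₂ := g) (by omega) (by omega), ih (f₂ := g) (l := R) (by omega) (by omega)]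

theorem stackSort_append_cons {L R : List ℕ} {m : ℕ} (hL : ∀ x ∈ L, x < m)
    (hR : ∀ x ∈ R, x ≤ m) : stackSort (L ++ m :: R) = stackSort L ++ stackSort R ++ [m] := by
  have hlen : (L ++ m :: R).length = (L.length + R.length) + 1 := by simp; omega
  rw [stackSort, hlen, ssAux_succ_append_cons _ hL hR, stackSort, stackSort,
    ssAux_congr_fuel (l := L) (by omega) le_rfl, ssAux_congr_fuel (l := R) (by omega) le_rfl]

theorem induction_on_max_split {P : List ℕ → Prop} (nil : P [])
    (split : ∀ L m R, (∀ x ∈ L, x < m) → (∀ x ∈ R, x ≤ m) → P L → P R → P (L ++ m :: R))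
    (l : List ℕ) : P l := by
  induction h : l.length using Nat.strong_induction_on generalizing l with
  | _ n ih =>
    rcases eq_or_ne l [] with rfl | hl
    · exact nil
    obtain ⟨L, m, R, rfl, hL, hR⟩ := exists_eq_append_cons_max hl
    simp only [List.length_append, List.length_cons] at h
    exact split L m R hL hR (ih _ (by omega) L rfl) (ih _ (by omega) R rfl)

theorem stackSort_perm (l : List ℕ) : (stackSort l).Perm l := by
  induction l using induction_on_max_split with
  | nil => rfl
  | split L m R hL hR ihL ihR =>
    rw [stackSort_append_cons hL hR, List.append_assoc]
    exact (ihL.append (ihR.append_right [m])).trans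
      (List.perm_append_comm.append_left L)

theorem reverse_filter_suffix_stackSort (t : ℕ) {l : List ℕ}
    (h : (l.filter (t ≤ ·)).Pairwise (· > ·)) : (l.filter (t ≤ ·)).reverse <:+ stackSort l := by
  induction l using induction_on_max_split with
  | nil => simp
  | split L m R hL hR _ ihR =>
    rw [stackSort_append_cons hL hR]
    by_cases htm : t ≤ m
    · have hLnil : L.filter (t ≤ ·) = [] := by
        refine List.filter_eq_nil_iff.2 fun u hu htu => ?_
        rw [List.filter_append, List.filter_cons_of_pos (by simpa using htm),
          List.pairwise_append] at h
        exact (h.2.2 u (List.mem_filter.2 ⟨hu, htu⟩) m List.mem_cons_self).asymm (hL u hu)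
      rw [List.filter_append, List.filter_cons_of_pos (by simpa using htm), hLnil,
        List.nil_append] at h ⊢
      rw [List.reverse_cons, List.suffix_append_self_iff]
      exact List.suffix_append_of_suffix (ihR (List.pairwise_cons.1 h).2)
    · rw [List.filter_eq_nil_iff.2 fun u hu => by
        simpa using (le_of_mem_max_split hL hR hu).trans_lt (not_le.1 htm)]
      simp

theorem pair_sublist_stackSort {x y a : ℕ} (hxy : x < y) (hax : a < x) {l l₁ l₂ : List ℕ}
    (hl : l = l₁ ++ a :: l₂) (h₂ : ∀ b ∈ l₂, b < a) (h : [x, y] <+ l) :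
    [x, a] <+ stackSort l := by
  induction l using induction_on_max_split generalizing l₁ with
  | nil => simp at h
  | split L m R hL hR _ ihR =>
    have hym : y ≤ m := le_of_mem_max_split hL hR (h.subset (by simp))
    obtain ⟨l₃, hR'⟩ : ∃ l₃, R = l₃ ++ a :: l₂ := by
      rcases List.append_eq_append_iff.1 hl with ⟨c, -, hc⟩ | ⟨c, -, hc⟩
      · rcases c with _ | ⟨b, c⟩
        · simp only [List.nil_append, List.cons.injEq] at hc; omega
        · simp only [List.cons_append, List.cons.injEq] at hc
          exact ⟨c, hc.2⟩
      · rcases c with _ | ⟨b, c⟩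
        · simp only [List.nil_append, List.cons.injEq] at hc; omega
        · simp only [List.cons_append, List.cons.injEq] at hc
          have := h₂ m (by simp [hc.2])
          omega
    rw [stackSort_append_cons hL hR]
    refine List.Sublist.trans ?_ (List.sublist_append_left _ [m])
    by_cases hxL : x ∈ L
    · have hxL' : x ∈ stackSort L := (stackSort_perm L).mem_iff.2 hxL
      have haR : a ∈ stackSort R := (stackSort_perm R).mem_iff.2 (by simp [hR'])
      exact (List.singleton_sublist.2 hxL').append (List.singleton_sublist.2 haR)
    · have hxyR := (h.of_cons_append_of_notMem hxL).of_cons_of_ne (by omega)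
      exact (ihR hR' hxyR).trans (List.sublist_append_right _ _)

def rlMaxima (σ : List ℕ) : Finset ℕ :=
  (Finset.univ.filter fun i : Fin σ.length => ∀ j, i < j → σ.get j < σ.get i).image σ.get

theorem card_rlMaxima (σ : List ℕ) : (rlMaxima σ).card = rmaxCount σ := by
  refine Finset.card_image_of_injOn fun i hi j hj hij => ?_
  simp only [Finset.mem_coe, Finset.mem_filter, Finset.mem_univ, true_and] at hi hj
  rcases lt_trichotomy i j with h | h | h
  · exact absurd hij (hi j h).ne'
  · exact h
  · exact absurd hij (hj i h).ne

theorem mem_rlMaxima {σ : List ℕ} {a : ℕ} :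
    a ∈ rlMaxima σ ↔ ∃ l₁ l₂, σ = l₁ ++ a :: l₂ ∧ ∀ b ∈ l₂, b < a := by
  simp only [rlMaxima, Finset.mem_image, Finset.mem_filter, Finset.mem_univ, true_and]
  constructor
  · rintro ⟨i, hi, rfl⟩
    refine ⟨σ.take i, σ.drop (i + 1), ?_, fun b hb => ?_⟩
    · rw [List.get_eq_getElem, ← List.drop_eq_getElem_cons, List.take_append_drop]
    · obtain ⟨j, hj, rfl⟩ := List.mem_drop_iff_getElem.1 hb
      exact hi ⟨i + 1 + j, by omega⟩ (by rw [Fin.lt_def]; dsimp; omega)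
  · rintro ⟨l₁, l₂, rfl, h₂⟩
    refine ⟨⟨l₁.length, by simp⟩, fun ⟨j, hj⟩ hlt => ?_, by simp⟩
    obtain ⟨k, rfl⟩ : ∃ k, j = l₁.length + 1 + k :=
      ⟨j - l₁.length - 1, by rw [Fin.lt_def] at hlt; dsimp at hlt; omega⟩
    have hk : k < l₂.length := by simp at hj; omega
    have : (l₁ ++ a :: l₂)[l₁.length + 1 + k] = l₂[k] := by
      rw [List.getElem_append_right (by omega)]
      simp [show l₁.length + 1 + k - l₁.length = k + 1 by omega]
    simpa [this] using h₂ _ (List.getElem_mem hk)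

theorem mem_rlMaxima_of_pairwise_filter {σ : List ℕ} {t a : ℕ}
    (h : (σ.filter (t ≤ ·)).Pairwise (· > ·)) (ha : a ∈ σ) (hta : t ≤ a) : a ∈ rlMaxima σ := by
  obtain ⟨l₁, l₂, rfl⟩ := List.append_of_mem ha
  refine mem_rlMaxima.2 ⟨l₁, l₂, rfl, fun b hb => ?_⟩
  by_cases htb : t ≤ b
  · rw [List.filter_append, List.filter_cons_of_pos (by simpa using hta), List.pairwise_append,
      List.pairwise_cons] at h
    exact h.2.1.1 b (List.mem_filter.2 ⟨hb, by simpa using htb⟩)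
  · omega

theorem notMem_rlMaxima_of_pair_sublist {σ : List ℕ} {x y : ℕ} (hσ : σ.Nodup) (hxy : x < y)
    (h : [x, y] <+ σ) : x ∉ rlMaxima σ := by
  rw [mem_rlMaxima]
  rintro ⟨l₁, l₂, rfl, h₂⟩
  have hx : x ∉ l₁ := fun hx => by
    simp only [List.nodup_append, List.nodup_cons, List.mem_cons] at hσ
    exact hσ.2.2 x hx x (Or.inl rfl) rfl
  have := h₂ y (List.singleton_sublist.1 (List.cons_sublist_cons.1 (h.of_cons_append_of_notMem hx)))
  omega

theorem exists_mem_rlMaxima_lt {σ : List ℕ} {n x y : ℕ} (hσ : σ.Nodup) (hn : ∀ v ∈ σ, v ≤ n)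
    (hxy : x < y) (h : [x, y] <+ σ) (hr : n - x < rmaxCount σ) : ∃ a ∈ rlMaxima σ, a < x := by
  obtain ⟨a, haR, haI⟩ := Finset.exists_mem_notMem_of_card_lt_card
    (s := Finset.Icc (x + 1) n) (t := rlMaxima σ) (by rw [Nat.card_Icc, card_rlMaxima]; omega)
  have han : a ≤ n := hn a (by obtain ⟨l₁, l₂, rfl, -⟩ := mem_rlMaxima.1 haR; simp)
  have hax : a ≠ x := fun hax => notMem_rlMaxima_of_pair_sublist hσ hxy h (hax ▸ haR)
  simp only [Finset.mem_Icc, not_and_or, not_le] at haI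
  exact ⟨a, haR, by omega⟩

theorem tailLen_le (n : ℕ) (s : List ℕ) : tailLen n s ≤ n :=
  Nat.sInf_le (Or.inl rfl)

theorem le_tailLen_iff {n m : ℕ} {s : List ℕ} (hs : s.length = n) (hm : m ≤ n) :
    m ≤ tailLen n s ↔ List.range' (n - m + 1) m <:+ s := by
  have hne : {ℓ : ℕ | ℓ = n ∨ s.getD (n - ℓ - 1) 0 ≠ n - ℓ}.Nonempty := ⟨n, Or.inl rfl⟩
  rw [tailLen, le_csInf_iff' hne, List.suffix_iff_eq_drop, List.ext_getElem_iff]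
  simp only [lowerBounds, Set.mem_ofPred_eq, List.length_range', List.length_drop, hs,
    List.getElem_range', List.getElem_drop, one_mul]
  constructor
  · intro h
    refine ⟨by omega, fun i hi _ => ?_⟩
    have hℓ := mt (@h (m - 1 - i)) (by omega)
    push Not at hℓ
    rw [List.getD_eq_getElem _ _ (by omega)] at hℓ
    convert hℓ.2.symm using 2 <;> omega
  · rintro ⟨-, h⟩ ℓ hℓ
    by_contra! hlt
    rcases hℓ with rfl | hℓ
    · omega
    apply hℓ
    rw [List.getD_eq_getElem _ _ (by omega)]
    convert (h (m - 1 - ℓ) (by omega) (by omega)).symm using 2 <;> omega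

/-- For `1 ≤ m ≤ n` this says `m ≤ zeil σ`. -/
def TopEntriesDecreasing (n m : ℕ) (σ : List ℕ) : Prop :=
  ∀ k, k + 2 ≤ m → σ.idxOf (n - k) < σ.idxOf (n - k - 1)

namespace TopEntriesDecreasing

variable {n m : ℕ} {σ : List ℕ}

theorem idxOf_lt (h : TopEntriesDecreasing n m σ) {k k' : ℕ} (hkk' : k < k') (hk' : k' < m) :
    σ.idxOf (n - k) < σ.idxOf (n - k') := by
  induction k' with
  | zero => omega
  | succ k' ih =>
    have hstep := h k' (by omega)
    rw [Nat.sub_sub] at hstep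
    rcases (Nat.lt_succ_iff_lt_or_eq.1 hkk') with hk | rfl
    · exact (ih hk (by omega)).trans hstep
    · exact hstep

theorem pairwise_filter (h : TopEntriesDecreasing n m σ) (hσ : σ.Nodup) (hn : ∀ v ∈ σ, v ≤ n) :
    (σ.filter (n - m + 1 ≤ ·)).Pairwise (· > ·) := by
  refine List.pairwise_of_forall_sublist fun {a b} hab => ?_
  have hab' := hab.trans List.filter_sublist
  have ha := List.mem_filter.1 (hab.subset (by simp : a ∈ [a, b]))
  have hb := List.mem_filter.1 (hab.subset (by simp : b ∈ [a, b]))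
  simp only [decide_eq_true_eq] at ha hb
  have hne : a ≠ b := by simpa using hσ.sublist hab'
  have hidx := hσ.idxOf_lt_idxOf_of_pair_sublist hab'
  have han := hn a ha.1
  have hbn := hn b hb.1
  by_contra! hba
  have := h.idxOf_lt (k := n - b) (k' := n - a) (by omega) (by omega)
  rw [Nat.sub_sub_self hbn, Nat.sub_sub_self han] at this
  omega

end TopEntriesDecreasing

section Permutation

variable {n m : ℕ} {σ : List ℕ}

theorem mem_iff_of_perm_range' (hσ : σ.Perm (List.range' 1 n)) {v : ℕ} :
    v ∈ σ ↔ 1 ≤ v ∧ v ≤ n := by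
  rw [hσ.mem_iff, List.mem_range'_1]
  omega

theorem filter_le_eq_reverse_range' (hσ : σ.Perm (List.range' 1 n))
    (h : (σ.filter (n - m + 1 ≤ ·)).Pairwise (· > ·)) (hm : m ≤ n) :
    σ.filter (n - m + 1 ≤ ·) = (List.range' (n - m + 1) m).reverse := by
  refine List.Perm.eq_of_pairwise (fun a b _ _ hab hba => absurd hab (lt_asymm hba)) h
    (List.pairwise_reverse.2 List.pairwise_lt_range') ?_
  refine (List.perm_ext_iff_of_nodup ((hσ.nodup_iff.2 List.nodup_range').filter _)
    (List.nodup_reverse.2 List.nodup_range')).2 fun v => ?_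
  simp only [List.mem_filter, List.mem_reverse, List.mem_range'_1, mem_iff_of_perm_range' hσ,
    decide_eq_true_eq]
  omega

theorem TopEntriesDecreasing.le_rmaxCount (hσ : σ.Perm (List.range' 1 n))
    (h : TopEntriesDecreasing n m σ) (hm : m ≤ n) : m ≤ rmaxCount σ := by
  have hpw := h.pairwise_filter (hσ.nodup_iff.2 List.nodup_range')
    fun v hv => ((mem_iff_of_perm_range' hσ).1 hv).2
  have hsub : Finset.Icc (n - m + 1) n ⊆ rlMaxima σ := fun v hv => by
    rw [Finset.mem_Icc] at hv
    exact mem_rlMaxima_of_pairwise_filter hpw ((mem_iff_of_perm_range' hσ).2 ⟨by omega, hv.2⟩) hv.1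
  simpa [card_rlMaxima, Nat.card_Icc, show n + 1 - (n - m + 1) = m by omega] using
    Finset.card_le_card hsub

theorem TopEntriesDecreasing.le_tailLen (hσ : σ.Perm (List.range' 1 n))
    (h : TopEntriesDecreasing n m σ) (hm : m ≤ n) : m ≤ tailLen n (stackSort σ) := by
  have hpw := h.pairwise_filter (hσ.nodup_iff.2 List.nodup_range')
    fun v hv => ((mem_iff_of_perm_range' hσ).1 hv).2
  have hsuf := reverse_filter_suffix_stackSort _ hpw
  rw [filter_le_eq_reverse_range' hσ hpw hm, List.reverse_reverse] at hsuf
  exact (le_tailLen_iff (by simp [(stackSort_perm σ).length_eq, hσ.length_eq]) hm).2 hsuf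

theorem topEntriesDecreasing_min_rmaxCount_tailLen (hσ : σ.Perm (List.range' 1 n)) :
    TopEntriesDecreasing n (min (rmaxCount σ) (tailLen n (stackSort σ))) σ := by
  intro k hk
  have hr : k + 2 ≤ rmaxCount σ := hk.trans (min_le_left _ _)
  have ht : k + 2 ≤ tailLen n (stackSort σ) := hk.trans (min_le_right _ _)
  have hkn : k + 1 < n := by have := tailLen_le n (stackSort σ); omega
  obtain ⟨x, hx⟩ : ∃ x, n - k - 1 = x := ⟨_, rfl⟩
  rw [hx, show n - k = x + 1 by omega]
  have hσnd : σ.Nodup := hσ.nodup_iff.2 List.nodup_range'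
  have hxσ : x ∈ σ := (mem_iff_of_perm_range' hσ).2 ⟨by omega, by omega⟩
  have hx1σ : x + 1 ∈ σ := (mem_iff_of_perm_range' hσ).2 ⟨by omega, by omega⟩
  by_contra! hle
  have hne : σ.idxOf x ≠ σ.idxOf (x + 1) := fun he => by simpa using (List.idxOf_inj hxσ).1 he
  have hxy : [x, x + 1] <+ σ := List.pair_sublist_of_idxOf_lt hx1σ (lt_of_le_of_ne hle hne)
  obtain ⟨a, haR, hax⟩ := exists_mem_rlMaxima_lt hσnd
    (fun v hv => ((mem_iff_of_perm_range' hσ).1 hv).2) (Nat.lt_succ_self x) hxy (by omega)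
  obtain ⟨l₁, l₂, hsplit, h₂⟩ := mem_rlMaxima.1 haR
  have hsorted := pair_sublist_stackSort (Nat.lt_succ_self x) hax hsplit h₂ hxy
  have hsuf := (le_tailLen_iff (s := stackSort σ)
    (by simp [(stackSort_perm σ).length_eq, hσ.length_eq]) hkn).1 ht
  rw [show n - (k + 2) + 1 = x by omega] at hsuf
  have := le_of_pair_sublist_of_range'_suffix ((stackSort_perm σ).nodup_iff.2 hσnd)
    (Nat.succ_pos _) hsuf hsorted
  omega

end Permutation

/-- For `σ ∈ Sₙ`, `zeil(σ) = min(rmax(σ), tls(σ))`: the largest `m ≥ 1` such that the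
entries `n, n-1, …, n-m+1` appear in this order in `σ` is `min(rmax σ, tl(s(σ)))`. -/
theorem stmt8 (n : ℕ) (hn : 1 ≤ n) (σ : List ℕ) (hσ : σ.Perm (List.range' 1 n)) :
    IsGreatest
      {m : ℕ | 1 ≤ m ∧ m ≤ n ∧
        ∀ k : ℕ, k + 2 ≤ m → σ.idxOf (n - k) < σ.idxOf (n - k - 1)}
      (min (rmaxCount σ) (tailLen n (stackSort σ))) := by
  have hone : TopEntriesDecreasing n 1 σ := fun k hk => absurd hk (by omega)
  refine ⟨⟨le_min (hone.le_rmaxCount hσ hn) (hone.le_tailLen hσ hn),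
    (min_le_right _ _).trans (tailLen_le n _), topEntriesDecreasing_min_rmaxCount_tailLen hσ⟩, ?_⟩
  rintro m ⟨-, hmn, h⟩
  exact le_min (TopEntriesDecreasing.le_rmaxCount hσ h hmn)
    (TopEntriesDecreasing.le_tailLen hσ h hmn)
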